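/- arXiv:2602.18587 — 6 statements merged into one kernel-verified Lean document; each statement's English description precedes it below -/
import Mathlib

section
/- Let (G,·) be a quasigroup satisfying Kunen's identity (N1): ((x·y)·z)·y = x·(y·(z·y)) for all x,y,z ∈ G. Then for every x ∈ G, the unique element j(x) with x·j(x)=x coincides with the unique element k(x) with k(x)·x=x; consequently there is a single map j : G → G satisfying x·j(x)=x and j(x)·x=x for all x ∈ G. -/
/-- In a quasigroup satisfying Kunen's identity (N1),
the unique `j x` with `x * j x = x` coincides with the unique `k x` with
`k x * x = x`; hence there is a single map `j : G → G` with
`x * j x = x` and `j x * x = x` for all `x`. -/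
theorem kunen_j_eq_k {G : Type*} [Mul G]
    (hL : ∀ a : G, Function.Bijective (fun x : G => a * x))
    (hR : ∀ a : G, Function.Bijective (fun x : G => x * a))
    (N1 : ∀ x y z : G, ((x * y) * z) * y = x * (y * (z * y))) :
    (∀ x jx kx : G, x * jx = x → kx * x = x → jx = kx) ∧
      ∃ j : G → G, ∀ x : G, x * j x = x ∧ j x * x = x := by
  have main : ∀ x jx kx : G, x * jx = x → kx * x = x → jx = kx := by
    intro y jy ky hj hk
    obtain ⟨z, hz⟩ := (hR y).2 jy
    simp only at hz
    -- hz : z * y = jy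
    have h1 : ∀ w : G, (w * y) * z = w := by
      intro w
      apply (hR y).1
      show ((w * y) * z) * y = w * y
      rw [N1 w y z, hz, hj]
    have h2 : ∀ w : G, (w * z) * y = w := by
      intro w
      apply (hR z).1
      exact h1 (w * z)
    have ha : ∀ w : G, w * (y * y) = ((w * y) * ky) * y := by
      intro w
      rw [N1 w y ky, hk]
    have hb : ∀ x : G, ((x * z) * (y * y)) * z = x * jy := by
      intro x
      rw [N1 x z (y * y), h1 y, hz]
    have key : ∀ x : G, x * jy = x * ky := by
      intro x
      rw [← hb x, ha (x * z), h2, h1]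
    exact (hL jy).1 (key jy)
  refine ⟨main, ?_⟩
  choose j hjx using fun x => (hL x).2 x
  simp only at hjx
  refine ⟨j, fun x => ⟨hjx x, ?_⟩⟩
  obtain ⟨k, hk⟩ := (hR x).2 x
  simp only at hk
  rw [main x (j x) k (hjx x) hk]
  exact hk
end

section
/- Let (G,·) be a quasigroup satisfying Kunen's identity (N1): ((x·y)·z)·y = x·(y·(z·y)) for all x,y,z ∈ G. Then for every x ∈ G the element j(x) is idempotent: j(x)·j(x) = j(x). -/
/-- In a quasigroup satisfying Kunen's identity (N1),
each value `j x` (the unique element with `x * j x = x`) is idempotent. -/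
theorem kunen_j_value_idempotent {G : Type*} [Mul G]
    (hL : ∀ a : G, Function.Bijective (fun x : G => a * x))
    (hR : ∀ a : G, Function.Bijective (fun x : G => x * a))
    (N1 : ∀ x y z : G, ((x * y) * z) * y = x * (y * (z * y)))
    (j : G → G) (hj : ∀ x : G, x * j x = x) :
    ∀ x : G, j x * j x = j x := by
  intro x
  have lcan : ∀ a b c : G, a * b = a * c → b = c := fun a b c h => (hL a).injective h
  have rcan : ∀ a b c : G, b * a = c * a → b = c := fun a b c h => (hR a).injective h
  set e := j x with hedef
  have he : x * e = x := hj x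
  -- S1 : e * (e*e) = e
  have S1 : e * (e * e) = e := by
    have h := N1 x e e
    rw [he, he, he] at h
    exact (lcan x _ _ (he.trans h)).symm
  -- S2 : right multiplication by e is an involution
  have S2 : ∀ u : G, (u * e) * e = u := by
    intro u
    obtain ⟨x', hx'⟩ := (hR e).surjective u
    simp only at hx'
    have h := N1 x' e e
    rw [S1, hx'] at h
    exact h
  -- k : right inverse translation for x
  obtain ⟨k, hk⟩ := (hR x).surjective e
  simp only at hk
  -- S7 : (v*k)*x = v
  have S7 : ∀ v : G, (v * k) * x = v := by
    intro v
    obtain ⟨v', hv'⟩ := (hR x).surjective v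
    simp only at hv'
    have h := N1 v' x k
    rw [hk, he, hv'] at h
    exact h
  -- S8 : (v*x)*k = v
  have S8 : ∀ v : G, (v * x) * k = v := fun v => rcan x _ _ (S7 (v * x))
  -- S9 : e*k = k
  have S9 : e * k = k := by
    have h7e := S7 e
    have h := N1 x x (e * k)
    rw [h7e, he] at h
    -- h : ((x*x)*(e*k))*x = x*x
    have h' := S7 (x * x)
    exact lcan (x * x) _ _ (rcan x _ _ (h.trans h'.symm))
  -- I1' : e*(k*w) = (k*(w*x))*k
  have I1 : ∀ w : G, e * (k * w) = (k * (w * x)) * k := by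
    intro w
    have h := N1 e k (w * x)
    rw [S9, S8 w] at h
    exact h.symm
  -- I2' : e*z = (k*(x*(z*x)))*k
  have I2 : ∀ z : G, e * z = (k * (x * (z * x))) * k := by
    intro z
    have h := N1 k x z
    rw [hk] at h
    -- h : (e*z)*x = k*(x*(z*x))
    have h2 := S8 (e * z)
    rw [h] at h2
    exact h2.symm
  -- 49' : x*((k*w)*x) = w*x
  have K49 : ∀ w : G, x * ((k * w) * x) = w * x := by
    intro w
    have h1 := I1 w
    have h2 := I2 (k * w)
    exact (lcan k _ _ (rcan k _ _ (h1.symm.trans h2))).symm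
  -- S11 : e*x = x
  have S11 : e * x = x := by
    have h := K49 x
    rw [hk] at h
    exact lcan x _ _ h
  -- conclusion
  have h := N1 e e x
  rw [he, S11, S11] at h
  -- h : ((e*e)*x)*e = x
  have h2 := S2 ((e * e) * x)
  rw [h, he] at h2
  -- h2 : x = (e*e)*x
  exact rcan x _ _ (h2.symm.trans S11.symm)
end

section
/- Let (G,·) be a quasigroup satisfying Kunen's identity (N1): ((x·y)·z)·y = x·(y·(z·y)) for all x,y,z ∈ G, and let j : G → G be the map with x·j(x)=x for all x. Then j is an idempotent endomorphism of the underlying set: j ∘ j = j, i.e. j(j(x)) = j(x) for all x ∈ G. -/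
/-- In a quasigroup satisfying Kunen's identity (N1),
the map `j` with `x * j x = x` is idempotent: `j ∘ j = j`. -/
theorem kunen_j_idempotent {G : Type*} [Mul G]
    (hL : ∀ a : G, Function.Bijective (fun x : G => a * x))
    (hR : ∀ a : G, Function.Bijective (fun x : G => x * a))
    (N1 : ∀ x y z : G, ((x * y) * z) * y = x * (y * (z * y)))
    (j : G → G) (hj : ∀ x : G, x * j x = x) :
    j ∘ j = j := by
  have rc : ∀ b : G, ∀ {u v : G}, u * b = v * b → u = v := fun b _ _ h => (hR b).1 h
  have lc : ∀ a : G, ∀ {u v : G}, a * u = a * v → u = v := fun a _ _ h => (hL a).1 h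
  funext x
  set e := j x with hE
  have he : x * e = x := hj x
  obtain ⟨q, hq⟩ := (hR x).2 e   -- q * x = e
  simp only [] at hq
  obtain ⟨p, hp⟩ := (hR x).2 x   -- p * x = x
  simp only [] at hp
  -- K1 : (a*x)*q = a
  have K1 : ∀ a : G, (a * x) * q = a := by
    intro a
    apply rc x
    calc ((a * x) * q) * x = a * (x * (q * x)) := N1 a x q
    _ = a * (x * e) := by rw [hq]
    _ = a * x := by rw [he]
  -- K2 : (a*q)*x = a
  have K2 : ∀ a : G, (a * q) * x = a := by
    intro a
    apply rc q
    exact K1 (a * q)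
  -- Step 3 : e*q = q
  have heq : e * q = q := by
    apply rc x
    calc (e * q) * x = ((q * x) * q) * x := by rw [hq]
    _ = q * (x * (q * x)) := N1 q x q
    _ = q * (x * e) := by rw [hq]
    _ = q * x := by rw [he]
  -- Step 4 : ∀ a, a * e = a * p
  have hep : ∀ a : G, a * e = a * p := by
    intro a
    calc a * e = a * (q * x) := by rw [hq]
    _ = a * (q * ((x * x) * q)) := by rw [K1 x]
    _ = ((a * q) * (x * x)) * q := (N1 a q (x * x)).symm
    _ = ((a * q) * (x * (p * x))) * q := by rw [hp]
    _ = ((((a * q) * x) * p) * x) * q := by rw [N1 (a * q) x p]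
    _ = ((a * p) * x) * q := by rw [K2 a]
    _ = a * p := K1 (a * p)
  -- Step 5 : e = p, hence e*x = x
  have hepe : e = p := lc x (hep x)
  have hex : e * x = x := by rw [hepe]; exact hp
  -- Step (*) : q * (x*q) = q
  have hqg : q * (x * q) = q := by
    apply lc x
    calc x * (q * (x * q)) = ((x * q) * x) * q := (N1 x q x).symm
    _ = x * q := by rw [K2 x]
  -- Step 7 : (x*q)*x = x
  have hgx : (x * q) * x = x := by
    apply rc q
    calc ((x * q) * x) * q = x * (q * (x * q)) := N1 x q x
    _ = x * q := by rw [hqg]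
  -- Step 8 : x*q = e
  have hge : x * q = e := rc x (hgx.trans hex.symm)
  -- Step 9 : q*e = q
  have hqe : q * e = q := by rw [← hge]; exact hqg
  -- Step 10 : e*e = e
  have hee : e * e = e := by
    apply rc q
    apply rc e
    calc ((e * e) * q) * e = e * (e * (q * e)) := N1 e e q
    _ = e * (e * q) := by rw [hqe]
    _ = q := by rw [heq, heq]
    _ = q * e := hqe.symm
    _ = (e * q) * e := by rw [heq]
  -- Step 11 : j e = e
  have : e * j e = e * e := by rw [hj e, hee]
  have hje : j e = e := lc e this
  simpa [hE] using hje
end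

section
/- Let (G,·) be a quasigroup satisfying Kunen's identity (N1): ((x·y)·z)·y = x·(y·(z·y)) for all x,y,z ∈ G, and let j : G → G be the map with x·j(x)=x for all x. Then for all x,y ∈ G one has (x·j(y))·j(y) = x. Equivalently, for each fixed y ∈ G the right translation R_{j(y)} : G → G, R_{j(y)}(x) = x·j(y), is an involution: R_{j(y)} ∘ R_{j(y)} = id_G. -/
/-- In a quasigroup satisfying Kunen's identity (N1), with `j`
the map satisfying `x * j x = x`, one has `(x * j y) * j y = x` for all `x, y`;
equivalently each right translation by `j y` is an involution. -/
theorem kunen_right_translation_involution {G : Type*} [Mul G]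
    (hL : ∀ a : G, Function.Bijective (fun x : G => a * x))
    (hR : ∀ a : G, Function.Bijective (fun x : G => x * a))
    (N1 : ∀ x y z : G, ((x * y) * z) * y = x * (y * (z * y)))
    (j : G → G) (hj : ∀ x : G, x * j x = x) :
    (∀ x y : G, (x * j y) * j y = x) ∧
      ∀ y : G, (fun x : G => x * j y) ∘ (fun x : G => x * j y) = id := by
  have key : ∀ y : G, j y * (j y * j y) = j y := by
    intro y
    have h1 := N1 y (j y) (j y)
    simp only [hj y] at h1
    -- h1 : y = y * (j y * (j y * j y))
    have h2 : y * (j y * (j y * j y)) = y * j y := by rw [hj y, ← h1]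
    exact (hL y).1 h2
  have main : ∀ x y : G, (x * j y) * j y = x := by
    intro x y
    have h1 := N1 x (j y) (j y)
    rw [key y] at h1
    -- h1 : ((x * j y) * j y) * j y = x * j y
    have := (hR (j y)).1 (a₁ := (x * j y) * j y) (a₂ := x)
    simp only at this
    exact this h1
  refine ⟨main, fun y => funext fun x => ?_⟩
  simpa using main x y
end

section
/- Let (G,·) be a quasigroup satisfying Kunen's identity (N1): ((x·y)·z)·y = x·(y·(z·y)) for all x,y,z ∈ G, and let j : G → G be the map with x·j(x)=x and j(x)·x=x for all x. Then j is a constant map: there exists e ∈ G such that j(x) = e for all x ∈ G. Moreover, the fixed-point set Fix(j) = {x ∈ G : j(x) = x} is the singleton {e}. -/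
/-- In a nonempty quasigroup satisfying Kunen's identity (N1),
the map `j` (with `x * j x = x` and `j x * x = x`) is constant with value `e`,
and its fixed-point set is the singleton `{e}`. -/
theorem kunen_fixed_point_collapse {G : Type*} [Mul G] [Nonempty G]
    (hL : ∀ a : G, Function.Bijective (fun x : G => a * x))
    (hR : ∀ a : G, Function.Bijective (fun x : G => x * a))
    (N1 : ∀ x y z : G, ((x * y) * z) * y = x * (y * (z * y)))
    (j : G → G) (hj : ∀ x : G, x * j x = x ∧ j x * x = x) :
    ∃ e : G, (∀ x : G, j x = e) ∧ {x : G | j x = x} = {e} := by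
  obtain ⟨a⟩ := ‹Nonempty G›
  have cancelR : ∀ {u v : G} (w : G), u * w = v * w → u = v := fun {u v} w h => (hR w).1 h
  have cancelL : ∀ (u : G) {v w : G}, u * v = u * w → v = w := fun u {v w} h => (hL u).1 h
  have jr : ∀ x : G, x * j x = x := fun x => (hj x).1
  have jl : ∀ x : G, j x * x = x := fun x => (hj x).2
  -- right division element: zz y * y = j y
  have hzz : ∀ y : G, ∃ z : G, z * y = j y := fun y => (hR y).2 (j y)
  choose zz hz1 using hzz
  -- z3 : (x*y)*zz y = x
  have z3 : ∀ x y : G, (x * y) * zz y = x := by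
    intro x y
    apply cancelR y
    have h := N1 x y (zz y)
    rw [hz1 y, jr y] at h
    exact h
  -- z2 : y * zz y = j y
  have z2 : ∀ y : G, y * zz y = j y := by
    intro y
    have h := z3 (j y) y
    rwa [jl y] at h
  -- z4 : (x*zz y)*y = x
  have z4 : ∀ x y : G, (x * zz y) * y = x := by
    intro x y
    apply cancelR (zz y)
    exact z3 (x * zz y) y
  -- e15 : j y * zz y = zz y
  have e15 : ∀ y : G, j y * zz y = zz y := by
    intro y
    apply cancelR y
    have h := N1 (zz y) y (zz y)
    rw [hz1 y, jr y, hz1 y] at h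
    rw [h, hz1 y]
  -- jz : j (zz y) = j y
  have jz : ∀ y : G, j (zz y) = j y := by
    intro y
    apply cancelR (zz y)
    rw [jl (zz y), e15 y]
  -- e14 : zz y * j y = zz y
  have e14 : ∀ y : G, zz y * j y = zz y := by
    intro y
    have h := jr (zz y)
    rwa [jz y] at h
  -- jj : j y * j y = j y
  have jj : ∀ y : G, j y * j y = j y := by
    intro y
    have h := N1 y (j y) (zz y)
    rw [jr y, z2 y, e14 y, e15 y, z2 y] at h
    exact h
  -- jjj : j (j y) = j y
  have jjj : ∀ y : G, j (j y) = j y := by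
    intro y
    apply cancelL (j y)
    rw [jr (j y), jj y]
  -- zjj : zz (j y) = j y
  have zjj : ∀ y : G, zz (j y) = j y := by
    intro y
    apply cancelR (j y)
    rw [hz1 (j y), jjj y, jj y]
  -- inv13 : (x*j y)*j y = x
  have inv13 : ∀ x y : G, (x * j y) * j y = x := by
    intro x y
    have h := z3 x (j y)
    rwa [zjj y] at h
  -- F7 : (x*y)*j y = (x*j y)*y
  have F7 : ∀ x y : G, (x * y) * j y = (x * j y) * y := by
    intro x y
    have h := N1 (x * j y) (j y) y
    rw [inv13 x y, jr y, jl y] at h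
    exact h
  -- e26 : ((x*j y)*y)*y = x*(y*y)
  have e26 : ∀ x y : G, ((x * j y) * y) * y = x * (y * y) := by
    intro x y
    have h := N1 x y (j y)
    rw [jl y, F7 x y] at h
    exact h
  -- e27 : zz y*(y*y) = y
  have e27 : ∀ y : G, zz y * (y * y) = y := by
    intro y
    have h := e26 (zz y) y
    rw [e14 y, hz1 y, jl y] at h
    exact h.symm
  -- zzz : zz (zz y) = y
  have zzz : ∀ y : G, zz (zz y) = y := by
    intro y
    apply cancelR (zz y)
    rw [hz1 (zz y), jz y, z2 y]
  -- e32 : y*(zz y*zz y) = zz y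
  have e32 : ∀ y : G, y * (zz y * zz y) = zz y := by
    intro y
    have h := e27 (zz y)
    rwa [zzz y] at h
  -- K2 : (x*y)*(w*zz y) = (x*(y*w))*zz y
  have K2 : ∀ x y w : G, (x * y) * (w * zz y) = (x * (y * w)) * zz y := by
    intro x y w
    apply cancelR y
    have h := N1 x y (w * zz y)
    rw [z4 w y] at h
    rw [h]
    exact (z4 (x * (y * w)) y).symm
  -- lam2a : (j y*(j y*w))*j y = j y*(w*j y)
  have lam2a : ∀ y w : G, (j y * (j y * w)) * j y = j y * (w * j y) := by
    intro y w
    have h := K2 (j y) (j y) w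
    rw [zjj y, jj y] at h
    exact h.symm
  -- lam2 : j y*(j y*w) = (j y*(w*j y))*j y
  have lam2 : ∀ y w : G, j y * (j y * w) = (j y * (w * j y)) * j y := by
    intro y w
    have h := lam2a y w
    calc j y * (j y * w) = ((j y * (j y * w)) * j y) * j y := (inv13 _ y).symm
      _ = (j y * (w * j y)) * j y := by rw [h]
  -- R1pre : w*zz y = zz y*((y*w)*zz y)
  have R1pre : ∀ y w : G, w * zz y = zz y * ((y * w) * zz y) := by
    intro y w
    apply cancelL y
    have h1 := K2 (j y) y w
    rw [jl y] at h1
    have h2 := N1 y (zz y) (y * w)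
    rw [z2 y] at h2
    exact h1.trans h2
  -- R1e : w*j y = j y*((j y*w)*j y)
  have R1e : ∀ y w : G, w * j y = j y * ((j y * w) * j y) := by
    intro y w
    have h := R1pre (j y) w
    rwa [zjj y] at h
  -- L3 : j y*(j y*(j y*w)) = w
  have L3 : ∀ y w : G, j y * (j y * (j y * w)) = w := by
    intro y w
    have h := lam2 y (j y * w)
    rw [← R1e y w, inv13 w y] at h
    exact h
  -- e24 : w*zz (j y*(j y*w)) = j y
  have e24 : ∀ y w : G, w * zz (j y * (j y * w)) = j y := by
    intro y w
    have h := z3 (j y) (j y * (j y * w))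
    rwa [L3 y w] at h
  -- e67 : (((x*y)*z)*y)*zz (y*(z*y)) = x
  have e67 : ∀ x y z : G, (((x * y) * z) * y) * zz (y * (z * y)) = x := by
    intro x y z
    have h := z3 x (y * (z * y))
    rwa [← N1 x y z] at h
  -- e124 : ((x*z)*y)*zz (y*(z*y)) = x*zz y
  have e124 : ∀ x y z : G, ((x * z) * y) * zz (y * (z * y)) = x * zz y := by
    intro x y z
    have h := e67 (x * zz y) y z
    rwa [z4 x y] at h
  -- e125 : (x*y)*zz (y*(j x*y)) = x*zz y
  have e125 : ∀ x y : G, (x * y) * zz (y * (j x * y)) = x * zz y := by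
    intro x y
    have h := e124 x y (j x)
    rwa [jr x] at h
  -- e126 : x*zz (j y*(j (x*j y)*j y)) = x
  have e126 : ∀ x y : G, x * zz (j y * (j (x * j y) * j y)) = x := by
    intro x y
    have h := e125 (x * j y) (j y)
    rw [inv13 x y, zjj y, inv13 x y] at h
    exact h
  -- e127 : zz (j y*(j (j x*j y)*j y)) = j x
  have e127 : ∀ x y : G, zz (j y * (j (j x * j y) * j y)) = j x := by
    intro x y
    apply cancelL (j x)
    rw [e126 (j x) y, jj x]
  -- e128 : j y*(j (j x*j y)*j y) = j x
  have e128 : ∀ x y : G, j y * (j (j x * j y) * j y) = j x := by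
    intro x y
    have h := congrArg zz (e127 x y)
    rwa [zzz (j y * (j (j x * j y) * j y)), zjj x] at h
  -- e129a : j (j x*j y)*j y = j y*(j y*j x)
  have e129a : ∀ x y : G, j (j x * j y) * j y = j y * (j y * j x) := by
    intro x y
    have h := L3 y (j (j x * j y) * j y)
    rw [e128 x y] at h
    exact h.symm
  -- e129 : j y*(j x*j y) = j (j x*j y)
  have e129 : ∀ x y : G, j y * (j x * j y) = j (j x * j y) := by
    intro x y
    apply cancelR (j y)
    rw [e129a x y]
    exact (lam2 y (j x)).symm
  -- zzhg : zz (j x*j y) = j y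
  have zzhg : ∀ x y : G, zz (j x * j y) = j y := by
    intro x y
    apply cancelR (j x * j y)
    rw [hz1 (j x * j y), e129 x y]
  -- final : j x = j y
  have final : ∀ x y : G, j x = j y := by
    intro x y
    have h := e32 (j x * j y)
    rw [zzhg x y, jj y, inv13 (j x) y] at h
    exact h
  have key : ∀ x : G, j a * x = x := fun x => by rw [final a x]; exact jl x
  refine ⟨j a, fun x => cancelR x (((hj x).2).trans (key x).symm), ?_⟩
  ext x
  simp only [Set.mem_setOf_eq, Set.mem_singleton_iff]
  constructor
  · intro hx
    exact hx ▸ (cancelR x (((hj x).2).trans (key x).symm))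
  · intro hx
    subst hx
    exact final (j a) a
end

section
/- (Kunen's theorem) Let (G,·) be a quasigroup satisfying Kunen's identity (N1): ((x·y)·z)·y = x·(y·(z·y)) for all x,y,z ∈ G. Then G admits a two-sided identity element: there exists e ∈ G such that x·e = x and e·x = x for all x ∈ G. Hence (G,·) is a loop. -/
/-- Kunen's theorem: Every nonempty quasigroup satisfying
Kunen's identity (N1) has a two-sided identity element, hence is a loop. -/
theorem kunen_quasigroup_is_loop {G : Type*} [Mul G] [Nonempty G]
    (hL : ∀ a : G, Function.Bijective (fun x : G => a * x))
    (hR : ∀ a : G, Function.Bijective (fun x : G => x * a))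
    (N1 : ∀ x y z : G, ((x * y) * z) * y = x * (y * (z * y))) :
    ∃ e : G, ∀ x : G, x * e = x ∧ e * x = x := by
  classical
  obtain ⟨c⟩ := ‹Nonempty G›
  -- cancellation
  have lcan : ∀ a : G, ∀ {x y : G}, a * x = a * y → x = y := by
    intro a x y h; exact (hL a).1 h
  have rcan : ∀ a : G, ∀ {x y : G}, x * a = y * a → x = y := by
    intro a x y h; exact (hR a).1 h
  -- divisions
  choose ld hld0 using fun a b => (hL a).2 b
  choose rd hrd0 using fun a b => (hR b).2 a
  have hld : ∀ a b : G, a * ld a b = b := hld0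
  have hrd : ∀ a b : G, rd a b * b = a := hrd0
  have ld_unique : ∀ a b x : G, a * x = b → ld a b = x := by
    intro a b x h; exact lcan a ((hld a b).trans h.symm)
  -- local identities and "inverses"
  set e : G → G := fun y => ld y y with he_def
  set r : G → G := fun y => rd (e y) y with hr_def
  have he : ∀ y : G, y * e y = y := fun y => hld y y
  have hr : ∀ y : G, r y * y = e y := fun y => hrd (e y) y
  -- L2 : (x*y) * r y = x
  have L2 : ∀ x y : G, (x * y) * r y = x := by
    intro x y
    apply rcan y
    rw [N1, hr, he]
  -- L3 : (x * r y) * y = x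
  have L3 : ∀ x y : G, (x * r y) * y = x := by
    intro x y
    have h := L2 (rd x y) y
    rw [hrd] at h
    rw [h, hrd]
  -- L4
  have L4 : ∀ y : G, (y * r y) * y = y := fun y => L3 y y
  -- E7 : ((x * r t) * (w * t)) * r t = x * (r t * w)
  have E7 : ∀ x w t : G, ((x * r t) * (w * t)) * r t = x * (r t * w) := by
    intro x w t
    rw [N1, L2]
  -- E8 : x * (w * t) = ((x * t) * (r t * w)) * t
  have E8 : ∀ x w t : G, x * (w * t) = ((x * t) * (r t * w)) * t := by
    intro x w t
    have h := E7 (x * t) w t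
    rw [L2 x t] at h
    calc x * (w * t) = ((x * (w * t)) * r t) * t := (L3 _ t).symm
      _ = ((x * t) * (r t * w)) * t := by rw [h]
  -- L8a : y * r y = e y
  have L8a : ∀ y : G, y * r y = e y := by
    intro y
    have h1 := N1 y y (y * r y)
    rw [L4 y] at h1
    have h2 := E8 y y y
    have h3 : ((y * y) * (y * r y)) * y = ((y * y) * (r y * y)) * y := by
      rw [h1, h2]
    have h4 := lcan (y * y) (rcan y h3)
    rw [h4, hr]
  -- L8 : e y * y = y
  have L8 : ∀ y : G, e y * y = y := by
    intro y
    rw [← L8a y]; exact L4 y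
  -- L9 : r t * e t = r t
  have L9 : ∀ t : G, r t * e t = r t := by
    intro t
    have h := N1 t (r t) t
    rw [L3 t t, L8a t] at h
    have h2 : t * (r t * e t) = t * r t := h.symm.trans (L8a t).symm
    exact lcan t h2
  -- K190 : z * ((r z * y) * z) = y * z
  have K190 : ∀ y z : G, z * ((r z * y) * z) = y * z := by
    intro y z
    have h1 := E8 z y z
    have h2 := N1 z z (r z * y)
    exact lcan z (h2.symm.trans h1.symm)
  -- A35 : e x * (x * (y * x)) = (x * y) * x
  have A35 : ∀ x y : G, e x * (x * (y * x)) = (x * y) * x := by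
    intro x y
    have h := N1 (e x) x y
    rw [L8 x] at h
    exact h.symm
  -- K36 : e x * (x * x) = x * x
  have K36 : ∀ x : G, e x * (x * x) = x * x := by
    intro x
    have h := A35 x (e x)
    rw [L8 x, he x] at h
    exact h
  -- K40 : (x*x) * e x = x*x
  have K40 : ∀ x : G, (x * x) * e x = x * x := by
    intro x
    have hexx : e (x * x) = e x := rcan (x * x) ((L8 (x * x)).trans (K36 x).symm)
    rw [← hexx]; exact he (x * x)
  -- K51 : (x*x)*x = x*(x*x)
  have K51 : ∀ x : G, (x * x) * x = x * (x * x) := by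
    intro x
    have h := N1 x x (e x)
    rw [K40, L8] at h
    exact h
  -- K193 : r x * (x*x) = x
  have K193 : ∀ x : G, r x * (x * x) = x := by
    intro x
    have h1 : x * ((r x * (x * x)) * x) = x * (x * x) := by
      rw [K190 (x * x) x, K51]
    have h2 : (r x * (x * x)) * x = x * x := lcan x h1
    exact rcan x h2
  -- idem : e x * e x = e x
  have idem : ∀ x : G, e x * e x = e x := by
    intro x
    have h := N1 (r x) x (e x)
    rw [hr, L8, K193] at h
    exact rcan x (h.trans (L8 x).symm)
  -- rex : r (e x) = e x
  have rex : ∀ x : G, r (e x) = e x := by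
    intro x
    have h := L2 x (e x)
    rw [he] at h
    exact lcan x (h.trans (he x).symm)
  -- Rsq : (w * e x) * e x = w
  have Rsq : ∀ w x : G, (w * e x) * e x = w := by
    intro w x
    have h := L3 w (e x)
    rwa [rex] at h
  -- ee : e (e x) = e x
  have ee : ∀ x : G, e (e x) = e x := fun x => ld_unique _ _ _ (idem x)
  -- dagger : e x * ((e x * w) * e x) = w * e x
  have dagger : ∀ x w : G, e x * ((e x * w) * e x) = w * e x := by
    intro x w
    have h := K190 w (e x)
    rwa [rex] at h
  -- ld/r lemmas
  have K21 : ∀ x y : G, ld (x * y) x = r y := fun x y => ld_unique _ _ _ (L2 x y)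
  have K24 : ∀ x y : G, r (ld x y) = ld y x := by
    intro x y
    have h := K21 x (ld x y)
    rw [hld] at h
    exact h.symm
  have erz : ∀ y : G, e (r y) = e y := fun y => ld_unique (r y) (r y) (e y) (L9 y)
  have K26 : ∀ x y : G, e (ld x y) = e (ld y x) := by
    intro x y
    rw [← erz (ld x y), K24]
  -- K130 : z * (ld (x*z) y * z) = ld x (y*z)
  have K130 : ∀ x y z : G, z * (ld (x * z) y * z) = ld x (y * z) := by
    intro x y z
    have h := N1 x z (ld (x * z) y)
    rw [hld] at h
    exact (ld_unique x (y * z) _ h.symm).symm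
  -- K257 : e y * (e (x * e y) * e y) = e x
  have K257 : ∀ x y : G, e y * (e (x * e y) * e y) = e x := by
    intro x y
    have h := K130 x (x * e y) (e y)
    rw [Rsq x y] at h
    exact h
  -- K258 : e (y * e x) * e x = ld (e x) (e y)
  have K258 : ∀ x y : G, e (y * e x) * e x = ld (e x) (e y) := by
    intro x y
    exact (ld_unique (e x) (e y) _ (K257 y x)).symm
  -- K259 : e x * (e w * e x) = e (w * e x)
  have K259 : ∀ x w : G, e x * (e w * e x) = e (w * e x) := by
    intro x w
    have h1 := dagger x (ld (e x) (e w))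
    rw [hld] at h1
    rw [← K258 x w, Rsq] at h1
    exact h1
  -- K273 : e (ld (e x) (e y)) = e y
  have K273 : ∀ x y : G, e (ld (e x) (e y)) = e y := by
    intro x y
    rw [← K258 x y]
    have h := K259 x (e (y * e x))
    rw [ee] at h
    rw [← h, K258 x y, hld]
  -- conclusion: e is constant
  have FIN : ∀ x y : G, e x = e y := by
    intro x y
    have h1 := K273 x y
    have h2 := K273 y x
    rw [K26] at h1
    exact h2.symm.trans h1
  refine ⟨e c, fun x => ⟨?_, ?_⟩⟩
  · rw [FIN c x]; exact he x
  · rw [FIN c x]; exact L8 x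
end
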